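/- Fix n ≥ 1. The Houghton group H_n is not co-Hopfian: there exists an injective group homomorphism η : H_n → H_n that is not surjective. -/

import Mathlib

/-- A permutation `σ` of `Fin n × ℕ` is an *eventual translation* if there are integers
`m₁, …, m_n` and a finite set `F ⊆ Fin n × ℕ` such that `σ (i, k) = (i, k + mᵢ)` for all
`(i, k) ∉ F`. -/
def IsEventualTranslation {n : ℕ} (σ : Equiv.Perm (Fin n × ℕ)) : Prop :=
  ∃ (m : Fin n → ℤ) (F : Finset (Fin n × ℕ)),
    ∀ p : Fin n × ℕ, p ∉ F →
      (σ p).1 = p.1 ∧ ((σ p).2 : ℤ) = (p.2 : ℤ) + m p.1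

/-- The Houghton group `H_n`: the subgroup of `Equiv.Perm (Fin n × ℕ)` consisting of the
eventual translations. -/
def HoughtonGroup (n : ℕ) : Subgroup (Equiv.Perm (Fin n × ℕ)) where
  carrier := {σ | IsEventualTranslation σ}
  one_mem' := ⟨0, ∅, fun p _ => by simp⟩
  mul_mem' := by
    rintro a b ⟨m, F, hF⟩ ⟨m', F', hF'⟩
    refine ⟨m + m', F' ∪ F.preimage b b.injective.injOn, fun p hp => ?_⟩
    simp only [Finset.mem_union, Finset.mem_preimage, not_or] at hp
    obtain ⟨hp1, hp2⟩ := hp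
    obtain ⟨hb1, hb2⟩ := hF' p hp1
    obtain ⟨ha1, ha2⟩ := hF (b p) hp2
    refine ⟨by simp [Equiv.Perm.mul_apply, ha1, hb1], ?_⟩
    simp only [Equiv.Perm.mul_apply, Pi.add_apply]
    rw [ha2, hb2, hb1]
    ring
  inv_mem' := by
    rintro a ⟨m, F, hF⟩
    refine ⟨-m, F.image a, fun p hp => ?_⟩
    have hmem : a⁻¹ p ∉ F := by
      intro h
      exact hp (Finset.mem_image.mpr ⟨a⁻¹ p, h, a.apply_symm_apply p⟩)
    obtain ⟨h1, h2⟩ := hF (a⁻¹ p) hmem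
    rw [show a (a⁻¹ p) = p from a.apply_symm_apply p] at h1 h2
    refine ⟨h1.symm, ?_⟩
    rw [← h1] at h2
    simp only [Pi.neg_apply]
    omega

/-!
Push every ray one step outwards: the shift `(i, k) ↦ (i, k + 1)` embeds `Fin n × ℕ` into
itself, missing exactly the base points `(i, 0)`. Conjugating by it (and acting trivially on the
base points) turns an eventual translation into an eventual translation with the same
translation lengths, which gives an injective endomorphism of `H_n`. Its image fixes every base
point, so it misses the transposition of `(i, 0)` and `(i, 1)`, which lies in `H_n`.
-/

namespace HoughtonGroup

variable {n : ℕ}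

theorem mem_of_finite_support {σ : Equiv.Perm (Fin n × ℕ)} (hσ : {p | σ p ≠ p}.Finite) :
    σ ∈ HoughtonGroup n :=
  ⟨0, hσ.toFinset, fun p hp => by
    rw [Set.Finite.mem_toFinset, Set.mem_ofPred_eq, not_not] at hp
    simp [hp]⟩

theorem swap_mem (p q : Fin n × ℕ) : Equiv.swap p q ∈ HoughtonGroup n :=
  mem_of_finite_support <| (Set.toFinite {p, q}).subset fun x hx => by
    by_contra hpq
    simp only [Set.mem_insert_iff, Set.mem_singleton_iff, not_or] at hpq
    exact hx (Equiv.swap_apply_of_ne_of_ne hpq.1 hpq.2)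

variable (n) in
def shift : Fin n × ℕ ↪ Fin n × ℕ :=
  (Function.Embedding.refl (Fin n)).prodMap ⟨(· + 1), add_left_injective 1⟩

theorem shift_apply (p : Fin n × ℕ) : shift n p = (p.1, p.2 + 1) := rfl

theorem base_notMem_range_shift (i : Fin n) : (i, 0) ∉ Set.range (shift n) := by
  rintro ⟨⟨j, k⟩, h⟩
  simp [shift_apply] at h

theorem viaEmbedding_shift_mem {σ : Equiv.Perm (Fin n × ℕ)} (hσ : σ ∈ HoughtonGroup n) :
    σ.viaEmbedding (shift n) ∈ HoughtonGroup n := by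
  obtain ⟨m, F, hF⟩ := hσ
  refine ⟨m, F.map (shift n) ∪ Finset.univ.image fun i => (i, 0), ?_⟩
  rintro ⟨i, _ | k⟩ hp
  · exact absurd (Finset.mem_union_right _ (Finset.mem_image_of_mem _ (Finset.mem_univ i))) hp
  · have hik : (i, k) ∉ F := fun h =>
      hp (Finset.mem_union_left _ (Finset.mem_map_of_mem (shift n) h))
    obtain ⟨h1, h2⟩ := hF (i, k) hik
    rw [show ((i, k + 1) : Fin n × ℕ) = shift n (i, k) from rfl,
      Equiv.Perm.viaEmbedding_apply, shift_apply, shift_apply]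
    refine ⟨h1, ?_⟩
    simp only at h2 ⊢
    push_cast
    omega

noncomputable def shiftHom : HoughtonGroup n →* HoughtonGroup n :=
  ((Equiv.Perm.viaEmbeddingHom (shift n)).comp (HoughtonGroup n).subtype).codRestrict _
    fun σ => viaEmbedding_shift_mem σ.2

theorem shiftHom_injective : Function.Injective (shiftHom (n := n)) := fun _ _ h =>
  Subtype.ext <| Equiv.Perm.viaEmbeddingHom_injective (shift n) (congrArg Subtype.val h)

theorem shiftHom_apply_base (σ : HoughtonGroup n) (i : Fin n) :
    (shiftHom σ : Equiv.Perm (Fin n × ℕ)) (i, 0) = (i, 0) :=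
  Equiv.Perm.viaEmbedding_apply_of_notMem _ _ _ (base_notMem_range_shift i)

theorem shiftHom_not_surjective (hn : 1 ≤ n) : ¬ Function.Surjective (shiftHom (n := n)) := by
  let i : Fin n := ⟨0, hn⟩
  intro hsurj
  obtain ⟨σ, hσ⟩ := hsurj ⟨Equiv.swap (i, 0) (i, 1), swap_mem _ _⟩
  have := shiftHom_apply_base σ i
  rw [hσ, Equiv.swap_apply_left] at this
  simp at this

end HoughtonGroup

/-- The Houghton group `H_n` (`n ≥ 1`) is not co-Hopfian: it admits an injective,
non-surjective group endomorphism. -/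
theorem houghton_not_coHopfian (n : ℕ) (hn : 1 ≤ n) :
    ∃ η : HoughtonGroup n →* HoughtonGroup n,
      Function.Injective η ∧ ¬ Function.Surjective η :=
  ⟨HoughtonGroup.shiftHom, HoughtonGroup.shiftHom_injective,
    HoughtonGroup.shiftHom_not_surjective hn⟩
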